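/- arXiv:2002.04135 — 7 statements merged into one kernel-verified Lean document; each statement's English description precedes it below -/
import Mathlib

section
/- For positive reals a and b, the conditions s = a + b + 2*sqrt(ab) and s = a + b + 1 - 2*sqrt(ab+a+b) together imply 36(a+b-1/3)^2 + 12(a-b)^2 = 1. -/
/-!
Eliminating `s` gives `√(ab) + √(ab + a + b) = 1/2`. The squares of the two roots differ by
`a + b`, so their difference is `2(a + b)`, whence `√(ab) = 1/4 - (a + b)`. Squaring this gives
`ab = (1/4 - (a + b))²`, which is the equation of the ellipse.
-/

lemma eq_half_sub_of_add_eq_of_sq_sub_sq_eq {u v c d : ℝ} (hc : c ≠ 0) (hsum : u + v = c)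
    (hsq : v ^ 2 - u ^ 2 = d) : u = (c - d / c) / 2 := by
  have hdiff : v - u = d / c := by
    rw [eq_div_iff hc, ← hsq, ← hsum]
    ring
  linarith

lemma sqrt_mul_eq_of_sqrt_mul_add_sqrt_eq_half {a b : ℝ} (ha : 0 ≤ a) (hb : 0 ≤ b)
    (h : √(a * b) + √(a * b + a + b) = 1 / 2) : √(a * b) = 1 / 4 - (a + b) := by
  have hsq : √(a * b + a + b) ^ 2 - √(a * b) ^ 2 = a + b := by
    rw [Real.sq_sqrt (by positivity), Real.sq_sqrt (by positivity)]
    ring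
  rw [eq_half_sub_of_add_eq_of_sq_sub_sq_eq (by norm_num) h hsq]
  ring

lemma ellipse_of_mul_eq_sq {a b : ℝ} (h : a * b = (1 / 4 - (a + b)) ^ 2) :
    36 * (a + b - 1 / 3) ^ 2 + 12 * (a - b) ^ 2 = 1 := by
  linear_combination -48 * h

theorem depth_two_ellipse (a b s : ℝ) (ha : 0 < a) (hb : 0 < b)
    (h1 : s = a + b + 2*Real.sqrt (a*b))
    (h2 : s = a + b + 1 - 2*Real.sqrt (a*b + a + b)) :
    36*(a + b - 1/3)^2 + 12*(a - b)^2 = 1 := by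
  have hsum : √(a * b) + √(a * b + a + b) = 1 / 2 := by linarith
  have hroot := sqrt_mul_eq_of_sqrt_mul_add_sqrt_eq_half ha.le hb.le hsum
  apply ellipse_of_mul_eq_sq
  rw [← hroot, Real.sq_sqrt (by positivity)]
end

section
/- For positive reals a, b with sqrt(ab) + sqrt(ab+a+b) = 1/2, we have (a+b)^2 - (a+b)/2 - ab + 1/16 = 0. -/
theorem sq_sub_eq_four_mul_of_add_eq {R : Type*} [CommRing R] {u v c p s : R}
    (hsum : u + v = c) (hu : u ^ 2 = p) (hv : v ^ 2 = p + s) :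
    (c ^ 2 - s) ^ 2 = 4 * c ^ 2 * p := by
  -- `s = v ^ 2 - u ^ 2 = c * (v - u)`, so `c ^ 2 - s = c * (u + v) - c * (v - u)`.
  have hcu : c ^ 2 - s = 2 * c * u := by
    linear_combination (u - v - c) * hsum - hu + hv
  rw [hcu]
  linear_combination 4 * c ^ 2 * hu

theorem sqrt_elimination (a b : ℝ) (ha : 0 < a) (hb : 0 < b)
    (h : Real.sqrt (a*b) + Real.sqrt (a*b + a + b) = 1/2) :
    (a + b)^2 - (a + b)/2 - a*b + 1/16 = 0 := by
  have hu : Real.sqrt (a*b) ^ 2 = a*b := Real.sq_sqrt (by positivity)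
  have hv : Real.sqrt (a*b + a + b) ^ 2 = a*b + (a + b) := by
    rw [Real.sq_sqrt (by positivity)]; ring
  linear_combination sq_sub_eq_four_mul_of_add_eq h hu hv
end

section
/- Let φ = (1+√5)/2 and p = φ − √φ. Then 0 < p < 1, and the triple (p^2, p, 1) satisfies p^2 = p + 1 + p^{-1} − 2*sqrt(p·1 + 1·p^{-1} + p^{-1}·p); that is, replacing the largest entry p^{-1} of the triple (p, 1, p^{-1}) by the smaller Descartes solution yields the triple (p^2, p, 1), which is the original triple rescaled by p. -/
/-!
Write `p = φ - √φ` and `q = φ + √φ`. Since `φ² = φ + 1`, we get `p q = φ² - φ = 1`, so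
`p⁻¹ = q` and `p + 1 + p⁻¹ = 2φ + 1 = φ³ = (φ √φ)²`. Hence the smaller Descartes solution for
`(p, 1, p⁻¹)` is `2φ + 1 - 2φ√φ = (φ - √φ)²`.
-/

namespace Real

open scoped goldenRatio

lemma goldenRatio_sub_sqrt_mul_add_sqrt : (φ - √φ) * (φ + √φ) = 1 := by
  linear_combination goldenRatio_sq - sq_sqrt goldenRatio_pos.le

lemma goldenRatio_sub_sqrt_pos : 0 < φ - √φ :=
  sub_pos.2 (sqrt_lt_self_iff.2 one_lt_goldenRatio)

lemma inv_goldenRatio_sub_sqrt : (φ - √φ)⁻¹ = φ + √φ :=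
  inv_eq_of_mul_eq_one_right goldenRatio_sub_sqrt_mul_add_sqrt

lemma goldenRatio_sub_sqrt_lt_one : φ - √φ < 1 := by
  have hq : 1 < φ + √φ := by linarith [one_lt_goldenRatio, sqrt_nonneg φ]
  rw [← inv_inv (φ - √φ), inv_goldenRatio_sub_sqrt]
  exact inv_lt_one_of_one_lt₀ hq

lemma sqrt_goldenRatio_sub_sqrt_add_inv_add_one :
    √((φ - √φ) + (φ - √φ)⁻¹ + 1) = φ * √φ := by
  have h : (φ - √φ) + (φ + √φ) + 1 = (φ * √φ) ^ 2 := by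
    linear_combination (-φ - 1) * goldenRatio_sq - φ ^ 2 * sq_sqrt goldenRatio_pos.le
  rw [inv_goldenRatio_sub_sqrt, h, sqrt_sq (by positivity)]

lemma goldenRatio_sub_sqrt_sq :
    (φ - √φ) ^ 2 = (φ - √φ) + 1 + (φ - √φ)⁻¹ - 2 * √((φ - √φ) + (φ - √φ)⁻¹ + 1) := by
  rw [sqrt_goldenRatio_sub_sqrt_add_inv_add_one, inv_goldenRatio_sub_sqrt]
  linear_combination goldenRatio_sq + sq_sqrt goldenRatio_pos.le

end Real

theorem golden_triple_self_similar :
    let φ : ℝ := (1 + Real.sqrt 5)/2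
    let p : ℝ := φ - Real.sqrt φ
    0 < p ∧ p < 1 ∧
    p^2 = p + 1 + p⁻¹ - 2*Real.sqrt (p*1 + 1*p⁻¹ + p⁻¹*p) ∧
    (p^2, p, (1:ℝ)) = (p*p, p*1, p*p⁻¹) := by
  intro _ p
  have hp : 0 < p := Real.goldenRatio_sub_sqrt_pos
  refine ⟨hp, Real.goldenRatio_sub_sqrt_lt_one, ?_, by simp [sq, mul_inv_cancel₀ hp.ne']⟩
  rw [mul_one, one_mul, inv_mul_cancel₀ hp.ne']
  exact Real.goldenRatio_sub_sqrt_sq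
end

section
/- Let φ = (1+√5)/2 and p = φ − √φ. Then p + 1 + 1/p − 2*sqrt(p + 1/p + 1) = p^2. -/
/-!
Since `φ² = φ + 1`, the conjugate `φ + √φ` of `p = φ - √φ` is `1 / p`. Hence
`p + 1/p + 1 = 2φ + 1 = φ³ = (φ √φ)²`, and both sides of the identity equal `2φ + 1 - 2φ√φ`.
-/

open Real

lemma Real.sub_sqrt_mul_add_sqrt {x : ℝ} (hx : 0 ≤ x) : (x - √x) * (x + √x) = x ^ 2 - x := by
  linear_combination -sq_sqrt hx

lemma Real.one_div_goldenRatio_sub_sqrt :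
    1 / (goldenRatio - √goldenRatio) = goldenRatio + √goldenRatio := by
  refine (eq_one_div_of_mul_eq_one_right ?_).symm
  rw [sub_sqrt_mul_add_sqrt goldenRatio_pos.le]
  linear_combination goldenRatio_sq

lemma Real.goldenRatio_sub_sqrt_add_one_div_add_one :
    (goldenRatio - √goldenRatio) + 1 / (goldenRatio - √goldenRatio) + 1
      = (goldenRatio * √goldenRatio) ^ 2 := by
  rw [one_div_goldenRatio_sub_sqrt]
  linear_combination (-goldenRatio ^ 2) * sq_sqrt goldenRatio_pos.le
    - (goldenRatio + 1) * goldenRatio_sq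

theorem golden_step :
    let φ : ℝ := (1 + Real.sqrt 5)/2
    let p : ℝ := φ - Real.sqrt φ
    p + 1 + 1/p - 2*Real.sqrt (p + 1/p + 1) = p^2 := by
  show (goldenRatio - √goldenRatio) + 1 + 1 / (goldenRatio - √goldenRatio)
      - 2 * √((goldenRatio - √goldenRatio) + 1 / (goldenRatio - √goldenRatio) + 1)
      = (goldenRatio - √goldenRatio) ^ 2
  rw [goldenRatio_sub_sqrt_add_one_div_add_one, sqrt_sq (by positivity),
    one_div_goldenRatio_sub_sqrt]
  linear_combination -goldenRatio_sq - sq_sqrt goldenRatio_pos.le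
end

section
/- Define the ellipse E[p,m] for coprime positive integers p < m by the equation ((m/p)x + (p^2+m^2−1)/(pm)·y)^2 + p^2/m^2 = 4xy + 2x + 2((m^2−p^2+1)/m^2)·y. Then E[p,m] is tangent to the x-axis at the point (p^2/m^2, 0); that is, (p^2/m^2, 0) lies on E[p,m], and it is the unique point of E[p,m] with y = 0. -/
/-- The point (x,y) lies on the ellipse E[p,m] of the x-axis corona. -/
def onCoronaEllipse (p m : ℕ) (x y : ℝ) : Prop :=
  ((m/p : ℝ)*x + (((p:ℝ)^2 + (m:ℝ)^2 - 1)/((p:ℝ)*(m:ℝ)))*y)^2 + (p:ℝ)^2/(m:ℝ)^2 =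
    4*x*y + 2*x + 2*(((m:ℝ)^2 - (p:ℝ)^2 + 1)/(m:ℝ)^2)*y

-- When `a * b = 1`, the difference of the two sides is the perfect square `(a * x - b) ^ 2`.
theorem sq_mul_add_sq_eq_two_mul_iff {R : Type*} [CommRing R] [NoZeroDivisors R] {a b x : R}
    (hab : a * b = 1) : (a * x) ^ 2 + b ^ 2 = 2 * x ↔ x = b ^ 2 := by
  have hsq : (a * x) ^ 2 + b ^ 2 - 2 * x = (a * x - b) ^ 2 := by
    linear_combination (2 * x) * hab
  have hlin : a * x = b ↔ x = b ^ 2 := by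
    constructor
    · intro h
      linear_combination (-x) * hab + b * h
    · rintro rfl
      linear_combination b * hab
  rw [← sub_eq_zero, hsq, pow_eq_zero_iff two_ne_zero, sub_eq_zero, hlin]

theorem onCoronaEllipse_zero_iff (p m : ℕ) (x : ℝ) :
    onCoronaEllipse p m x 0 ↔ ((m / p : ℝ) * x) ^ 2 + ((p : ℝ) / m) ^ 2 = 2 * x := by
  simp only [onCoronaEllipse, mul_zero, add_zero, zero_add, div_pow]

theorem corona_ellipse_tangent_x_axis_general (p m : ℕ) (hp : 0 < p) (hpm : p < m) :
    onCoronaEllipse p m ((p:ℝ)^2/(m:ℝ)^2) 0 ∧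
    ∀ x : ℝ, onCoronaEllipse p m x 0 → x = (p:ℝ)^2/(m:ℝ)^2 := by
  have hab : (m / p : ℝ) * (p / m) = 1 := by
    have hm0 : (m : ℝ) ≠ 0 := by exact_mod_cast (hp.trans hpm).ne'
    have hp0 : (p : ℝ) ≠ 0 := by exact_mod_cast hp.ne'
    field_simp
  simp only [← div_pow, onCoronaEllipse_zero_iff, sq_mul_add_sq_eq_two_mul_iff hab, true_and]
  exact fun _ h => h

theorem corona_ellipse_tangent_x_axis (p m : ℕ) (hp : 0 < p) (hpm : p < m)
    (hcop : Nat.Coprime p m) :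
    onCoronaEllipse p m ((p:ℝ)^2/(m:ℝ)^2) 0 ∧
    ∀ x : ℝ, onCoronaEllipse p m x 0 → x = (p:ℝ)^2/(m:ℝ)^2 :=
  corona_ellipse_tangent_x_axis_general p m hp hpm
end

section
/- For every natural number p ≥ 1, the point (p^2/(p+1)^2, 1/(p+1)^2) lies on the parabola 2(x+y) = (x−y)^2+1 and on the ellipse given by (((p+1)/p)x + 2y)^2 + p^2/(p+1)^2 = 4xy + 2x + (4/(p+1))y; moreover, this ellipse is tangent to the x-axis at (p^2/(p+1)^2, 0), so the tangency points with the x-axis and with the parabola are vertically aligned. -/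
/-!
Put `s = p/(p+1)`. Then the tangency abscissa is `s²` and the point on the parabola is
`(s², (1-s)²)`, i.e. the parabola is `√x + √y = 1` in disguise, and the ellipse reads
`(x/s + 2y)² + s² = 4xy + 2x + 4(1-s)y`. On `y = 0` this becomes `(x/s - s)² = 0`, a double
root at `x = s²`, which is tangency to the x-axis exactly below the point on the parabola.
-/

/-- The ellipse `E[p, p+1]` written in the parameter `s = p/(p+1)`. -/
def chainEllipse (s x y : ℝ) : Prop :=
  (x / s + 2 * y) ^ 2 + s ^ 2 = 4 * x * y + 2 * x + 4 * (1 - s) * y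

theorem sq_sq_one_sub_mem_parabola (s : ℝ) :
    2 * (s ^ 2 + (1 - s) ^ 2) = (s ^ 2 - (1 - s) ^ 2) ^ 2 + 1 := by
  ring

namespace chainEllipse

theorem sq_sq_one_sub (s : ℝ) : chainEllipse s (s ^ 2) ((1 - s) ^ 2) := by
  unfold chainEllipse
  field_simp
  ring

theorem zero_iff {s : ℝ} (hs : s ≠ 0) (x : ℝ) : chainEllipse s x 0 ↔ x = s ^ 2 := by
  have key : chainEllipse s x 0 ↔ (x / s - s) ^ 2 = 0 := by
    have hsq : (x / s - s) ^ 2 = (x / s) ^ 2 + s ^ 2 - 2 * x := by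
      field_simp
      ring
    rw [hsq, chainEllipse, sub_eq_zero]
    ring_nf
  rw [key, sq_eq_zero_iff, sub_eq_zero, div_eq_iff hs, ← sq]

end chainEllipse

theorem main_chain_vertical_alignment (p : ℕ) (hp : 1 ≤ p) :
    let x0 : ℝ := (p:ℝ)^2 / ((p:ℝ)+1)^2
    let y0 : ℝ := 1 / ((p:ℝ)+1)^2
    let E : ℝ → ℝ → Prop := fun x y =>
      ((((p:ℝ)+1)/(p:ℝ))*x + 2*y)^2 + (p:ℝ)^2/((p:ℝ)+1)^2 =
        4*x*y + 2*x + (4/((p:ℝ)+1))*y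
    (2*(x0 + y0) = (x0 - y0)^2 + 1) ∧
    E x0 y0 ∧
    E x0 0 ∧
    (∀ x : ℝ, E x 0 → x = x0) := by
  intro x0 y0 E
  have hp0 : (p : ℝ) ≠ 0 := Nat.cast_ne_zero.mpr (by omega)
  have hp1 : (p : ℝ) + 1 ≠ 0 := by positivity
  set s : ℝ := p / (p + 1)
  have hs : s ≠ 0 := div_ne_zero hp0 hp1
  have hx0 : x0 = s ^ 2 := (div_pow _ _ 2).symm
  have hy0 : y0 = (1 - s) ^ 2 := by
    simp only [y0, s]
    field_simp
    ring
  have hE : E = chainEllipse s := by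
    funext x y
    simp only [E, chainEllipse, s]
    congr 3
    · field_simp
    · field_simp
      ring
  rw [hx0, hy0, hE]
  exact ⟨sq_sq_one_sub_mem_parabola s, chainEllipse.sq_sq_one_sub s,
    (chainEllipse.zero_iff hs _).2 rfl, fun x => (chainEllipse.zero_iff hs x).1⟩
end

section
/- For all x, y satisfying 16x^2 + 28xy + 16y^2 − 2x − 2y + 1/16 = 0, setting s1 = 1/4 − 3x − 3y, s2 = 2(x+y+s1), s3 = (s2+1)/2 − x − y gives (s1 + x + y)^2 = 2(s1^2 + x^2 + y^2) and also (1 + s3 + x + y)^2 = 2(1 + s3^2 + x^2 + y^2). -/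
/-!
The Descartes defect `(a + b + x + y)^2 - 2(a^2 + b^2 + x^2 + y^2)` is a quadratic in `a` with
leading coefficient `-1` whose roots sum to `2(b + x + y)`, so it is unchanged when a disk of the
chain is replaced by the next one, `a ↦ 2(x + y + b) - a`. Hence the defect is the same for
`(0, s1, x, y)` and `(s3, 1, x, y)`, and the ellipse is exactly the vanishing of the first one. The
constant `1/4` in `s1` is what makes the middle link `s1 + s3 = 2(x + y + s2)` of the chain hold.
-/

section Descartes

variable {R : Type*} [CommRing R]

def descartesDefect (a b c d : R) : R :=
  (a + b + c + d) ^ 2 - 2 * (a ^ 2 + b ^ 2 + c ^ 2 + d ^ 2)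

theorem descartesDefect_eq_of_add_eq {a b c x y : R} (h : a + c = 2 * (b + x + y)) :
    descartesDefect b c x y = descartesDefect a b x y := by
  unfold descartesDefect
  linear_combination (a - c) * h

end Descartes

theorem depth4_ellipse_descartes (x y : ℝ)
    (h : 16*x^2 + 28*x*y + 16*y^2 - 2*x - 2*y + 1/16 = 0) :
    ∀ s1 s2 s3 : ℝ, s1 = 1/4 - 3*x - 3*y → s2 = 2*(x + y + s1) →
      s3 = (s2 + 1)/2 - x - y →
      (s1 + x + y)^2 = 2*(s1^2 + x^2 + y^2) ∧
      (1 + s3 + x + y)^2 = 2*(1 + s3^2 + x^2 + y^2) := by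
  intro s1 s2 s3 hs1 hs2 hs3
  have first : descartesDefect 0 s1 x y = 0 := by
    rw [descartesDefect, hs1]
    linear_combination -h
  have last : descartesDefect s3 1 x y = 0 := by
    rw [descartesDefect_eq_of_add_eq (a := s2) (by linear_combination -2 * hs3),
      descartesDefect_eq_of_add_eq (a := s1) (by linear_combination -2 * hs1 - 3 / 2 * hs2 + hs3),
      descartesDefect_eq_of_add_eq (a := 0) (by linear_combination hs2), first]
  unfold descartesDefect at first last
  exact ⟨by linear_combination first, by linear_combination last⟩
end
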